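/- For every n ≥ 2, every t ∈ [0, 2π), all M₁, M₂ ∈ L_n and all k ≠ l in {1, ..., n}, one has ⟨φ_l^t, (M₁ ⊗ M₂) φ_k^t⟩ = 0. -/
import Mathlib


open Matrix

/-- η = exp(iπ/4). -/
noncomputable def eta : ℂ := Complex.exp (Real.pi / 4 * Complex.I)

/-- U = diag(η, conj η) ∈ M₂(ℂ). -/
noncomputable def U : Matrix (Fin 2) (Fin 2) ℂ := !![eta, 0; 0, star eta]

/-- L_n ⊂ M_{2n}(ℂ): n×n block matrices (ℂ^{2n} being identified with n copies of ℂ²)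
whose diagonal 2×2 blocks all equal a common A ∈ M₂(ℂ), whose (i,j) block is
λ_{ij}U* for i < j and λ_{ij}U for i > j. -/
noncomputable def Ln (n : ℕ) : Set (Matrix (Fin n × Fin 2) (Fin n × Fin 2) ℂ) :=
  {M | ∃ (A : Matrix (Fin 2) (Fin 2) ℂ) (lam : Fin n → Fin n → ℂ),
    ∀ (i j : Fin n) (a b : Fin 2),
      M (i, a) (j, b) =
        if i = j then A a b
        else if (i : ℕ) < (j : ℕ) then lam i j * Uᴴ a b
        else lam i j * U a b}

open Kronecker Real
lemma eta_sq : eta * eta = Complex.I := by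
  rw [eta, ← Complex.exp_add]
  have h : (Real.pi / 4 * Complex.I + Real.pi / 4 * Complex.I) = (Real.pi/2 : ℝ) * Complex.I := by
    push_cast; ring
  rw [h, Complex.exp_mul_I]
  simp

lemma star_eta_sq : star eta * star eta = -Complex.I := by
  rw [← star_mul', eta_sq, Complex.star_def, Complex.conj_I]


/-- φ_k^t = (|2k−1⟩⊗|2k−1⟩ + e^{it}|2k⟩⊗|2k⟩)/√2 ∈ ℂ^{2n} ⊗ ℂ^{2n}, where |2k−1⟩ = (k,0)
and |2k⟩ = (k,1) in the identification of ℂ^{2n} with n copies of ℂ². -/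
noncomputable def phiK (n : ℕ) (t : ℝ) (k : Fin n) :
    (Fin n × Fin 2) × (Fin n × Fin 2) → ℂ := fun p =>
  ((if p = ((k, 0), (k, 0)) then 1 else 0) +
    Complex.exp (t * Complex.I) * (if p = ((k, 1), (k, 1)) then 1 else 0)) / Real.sqrt 2

/-- For every n ≥ 2, t ∈ [0, 2π), M₁, M₂ ∈ L_n and k ≠ l,
⟨φ_l^t, (M₁ ⊗ M₂)φ_k^t⟩ = 0. -/
theorem phiK_inner_kron_eq_zero (n : ℕ) (hn : 2 ≤ n) (t : ℝ) (ht : t ∈ Set.Ico 0 (2 * π))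
    (M₁ M₂ : Matrix (Fin n × Fin 2) (Fin n × Fin 2) ℂ)
    (hM₁ : M₁ ∈ Ln n) (hM₂ : M₂ ∈ Ln n) (k l : Fin n) (hkl : k ≠ l) :
    star (phiK n t l) ⬝ᵥ (M₁ ⊗ₖ M₂).mulVec (phiK n t k) = 0 := by
  obtain ⟨A₁, lam₁, h₁⟩ := hM₁
  obtain ⟨A₂, lam₂, h₂⟩ := hM₂
  simp only [dotProduct, mulVec, phiK, Pi.star_apply, div_eq_mul_inv, mul_add, add_mul,
    mul_ite, ite_mul, mul_one, mul_zero, one_mul, zero_mul, star_add, star_mul', star_one,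
    star_zero, star_inv₀, apply_ite star, Finset.sum_add_distrib, Finset.sum_ite_eq',
    Finset.mem_univ, if_true, kroneckerMap_apply]
  have hs2 : star ((Real.sqrt 2 : ℝ) : ℂ) = ((Real.sqrt 2 : ℝ) : ℂ) := by
    simp [Complex.star_def, Complex.conj_ofReal]
  have hee : star (Complex.exp (t * Complex.I)) * Complex.exp (t * Complex.I) = 1 := by
    rw [Complex.star_def, ← Complex.exp_conj, ← Complex.exp_add]
    simp [Complex.ext_iff]
  rw [h₁ l k, h₁ l k, h₁ l k, h₁ l k, h₂ l k, h₂ l k, h₂ l k, h₂ l k, hs2]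
  rcases lt_or_gt_of_ne (fun h => hkl (Fin.ext h.symm) : (l : ℕ) ≠ (k : ℕ)) with h | h
  · simp only [if_neg (Ne.symm hkl), if_pos h, U, Matrix.conjTranspose_apply]
    norm_num [Matrix.cons_val_zero, Matrix.cons_val_one, Matrix.head_cons]
    set e := Complex.exp (t * Complex.I)
    set K := (((Real.sqrt 2 : ℝ) : ℂ))⁻¹ * (((Real.sqrt 2 : ℝ) : ℂ))⁻¹ * lam₁ l k * lam₂ l k
    simp only [← Complex.star_def]
    linear_combination K * star_eta_sq + K * (star e * e) * eta_sq + K * Complex.I * hee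
  · simp only [if_neg (Ne.symm hkl), if_neg (not_lt.mpr (le_of_lt h)), U]
    norm_num [Matrix.cons_val_zero, Matrix.cons_val_one, Matrix.head_cons]
    set e := Complex.exp (t * Complex.I)
    set K := (((Real.sqrt 2 : ℝ) : ℂ))⁻¹ * (((Real.sqrt 2 : ℝ) : ℂ))⁻¹ * lam₁ l k * lam₂ l k
    simp only [← Complex.star_def]
    linear_combination K * eta_sq + K * (star e * e) * star_eta_sq - K * Complex.I * hee
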